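/- Let N ≥ 1 and let {iX_j}_{j=1}^N satisfy condition (H1). Then for every compact set K ⊂ ℝ^{n+1} there exists a constant C_K > 0, depending only on the L^∞(K)-norms of the coefficients a_{jk}, of the structure functions c^{jk}_l, and of their derivatives, such that for all v ∈ C_0^∞(K): Im(P_1 v, v) ≥ Σ_{j=1}^N Re( ( Σ_{k=1}^N i c^{j1}_k X_k^* X_j + (i/2) d_1 X_j^* X_j + (i/2)( c'_j - (X_1 d_j) + 2 (X_j d_1) + d_1 d_j ) X_j ) v, v ) - C_K ‖v‖_{L²}², where c'_j := Σ_{k=1}^N ( Σ_{l=1}^N c^{lk}_j + (X_k c_j^{k1}) + d_k c_j^{k1} - 2 d_k c_k^{j1} ). -/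

import Mathlib

open MeasureTheory

noncomputable section

namespace Carleman

/-- The ambient space `ℝ^{n+1}`. -/
abbrev Spc (n : ℕ) : Type := EuclideanSpace ℝ (Fin (n + 1))

/-- Real coefficients `(a₁,…,a_{n+1})` of a first order operator on `ℝ^{n+1}`. -/
abbrev Coeffs (n : ℕ) : Type := Fin (n + 1) → Spc n → ℝ

variable {n : ℕ}

/-- `k`-th partial derivative `∂ₖ u`. -/
def pd (k : Fin (n + 1)) (u : Spc n → ℂ) (x : Spc n) : ℂ :=
  fderiv ℝ u x (EuclideanSpace.single k (1 : ℝ))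

/-- The operator `X = ∑ₖ aₖ Dₖ`, with `Dₖ = -i ∂ₖ`. -/
def Xop (a : Coeffs n) (u : Spc n → ℂ) : Spc n → ℂ :=
  fun x => ∑ k, (a k x : ℂ) * (-Complex.I * pd k u x)

/-- The function `d = ∑ₖ Dₖ aₖ`. -/
def dfun (a : Coeffs n) (x : Spc n) : ℂ :=
  ∑ k, -Complex.I * (fderiv ℝ (a k) x (EuclideanSpace.single k (1 : ℝ)) : ℂ)

/-- The formal `L²` adjoint `X^* = X + d`. -/
def Xstar (a : Coeffs n) (u : Spc n → ℂ) : Spc n → ℂ :=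
  fun x => Xop a u x + dfun a x * u x

/-- All the coefficients are smooth. -/
def SmoothCoeffs (a : Coeffs n) : Prop := ∀ k, ContDiff ℝ (⊤ : ℕ∞) (a k)

/-- `∑ⱼ Xⱼ^* Xⱼ u`. -/
def sumXsX {N : ℕ} (a : Fin N → Coeffs n) (u : Spc n → ℂ) : Spc n → ℂ :=
  fun x => ∑ j, Xstar (a j) (Xop (a j) u) x

/-- `P₁ = X₁ ∑ⱼ Xⱼ^* Xⱼ + X₀`, where `X₁ = X_{j₁}`. -/
def P1 {N : ℕ} (a0 : Coeffs n) (a : Fin N → Coeffs n) (j1 : Fin N) (u : Spc n → ℂ) :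
    Spc n → ℂ :=
  fun x => Xop (a j1) (sumXsX a u) x + Xop a0 u x

/-- The formal adjoint `P₁^* = ∑ⱼ Xⱼ^* Xⱼ X₁^* + X₀^*`. -/
def P1star {N : ℕ} (a0 : Coeffs n) (a : Fin N → Coeffs n) (j1 : Fin N) (u : Spc n → ℂ) :
    Spc n → ℂ :=
  fun x => (∑ j, Xstar (a j) (Xop (a j) (Xstar (a j1) u)) x) + Xstar a0 u x

/-- A smooth function with purely imaginary values. -/
def SmoothImag (g : Spc n → ℂ) : Prop := ContDiff ℝ (⊤ : ℕ∞) g ∧ ∀ x, (g x).re = 0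

/-- `c` is a family of structure functions for the system `a`:
`[X_j, X_k] = ∑ₗ (c j k l) • Xₗ` as operators on smooth functions. -/
def IsInvolutiveWith {N : ℕ} (a : Fin N → Coeffs n)
    (c : Fin N → Fin N → Fin N → Spc n → ℂ) : Prop :=
  (∀ j k l, SmoothImag (c j k l)) ∧
    ∀ j k, ∀ u : Spc n → ℂ, ContDiff ℝ (⊤ : ℕ∞) u → ∀ x,
      Xop (a j) (Xop (a k) u) x - Xop (a k) (Xop (a j) u) x = ∑ l, c j k l x * Xop (a l) u x

/-- Condition (H1): smooth real vector fields forming a globally involutive system. -/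
def CondH1 {N : ℕ} (a : Fin N → Coeffs n) : Prop :=
  (∀ j, SmoothCoeffs (a j)) ∧ ∃ c, IsInvolutiveWith a c

/-- `C₀^∞(K)`: smooth functions supported in the compact set `K`. -/
def TestOn (K : Set (Spc n)) (u : Spc n → ℂ) : Prop :=
  ContDiff ℝ (⊤ : ℕ∞) u ∧ tsupport u ⊆ K

/-- The weighted function `e^{λ f} u`. -/
def expw (lam : ℝ) (f : Spc n → ℝ) (u : Spc n → ℂ) : Spc n → ℂ :=
  fun x => (Real.exp (lam * f x) : ℂ) * u x

/-- The `L²(ℝ^{n+1})` inner product `(u, v) = ∫ u v̄`. -/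
def ip (u v : Spc n → ℂ) : ℂ := ∫ x : Spc n, u x * (starRingEnd ℂ) (v x)

/-- The squared `L²(ℝ^{n+1})` norm. -/
def l2sq (u : Spc n → ℂ) : ℝ := ∫ x : Spc n, ‖u x‖ ^ 2

/-- The squared Sobolev `H^s(ℝ^{n+1})` norm, via the Fourier transform. -/
def hsSq (s : ℝ) (u : Spc n → ℂ) : ℝ :=
  ∫ ξ : Spc n, (1 + ‖ξ‖ ^ 2) ^ s * ‖FourierTransform.fourier u ξ‖ ^ 2

/-- The real valued function `-iX₁f` (for `f` real valued). -/
def mIXf (a1 : Coeffs n) (f : Spc n → ℝ) (x : Spc n) : ℝ :=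
  (-Complex.I * Xop a1 (fun y => (f y : ℂ)) x).re

/-- The coefficient vector of the real vector field `iX` attached to `a`. -/
def coeffVF (a : Coeffs n) : Spc n → Spc n :=
  fun x => (EuclideanSpace.equiv (Fin (n + 1)) ℝ).symm fun k => a k x

/-- Lie bracket of vector fields. -/
def vfLie (V W : Spc n → Spc n) : Spc n → Spc n :=
  fun x => fderiv ℝ W x (V x) - fderiv ℝ V x (W x)

/-- Iterated commutators of length `m` of the system of vector fields `V`. -/
inductive IsBracket {N : ℕ} (V : Fin N → Spc n → Spc n) : ℕ → (Spc n → Spc n) → Prop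
  | base (j : Fin N) : IsBracket V 1 (V j)
  | lie {p q : ℕ} {W₁ W₂ : Spc n → Spc n} :
      IsBracket V p W₁ → IsBracket V q W₂ → IsBracket V (p + q) (vfLie W₁ W₂)

/-- Hörmander's condition of rank `r`: the vector fields `iX_j` together with their
iterated commutators of length up to `r` span the whole space at every point. -/
def Hormander {N : ℕ} (a : Fin N → Coeffs n) (r : ℕ) : Prop :=
  ∀ x : Spc n,
    Submodule.span ℝ
      {w : Spc n | ∃ m, m ≤ r ∧ ∃ W, IsBracket (fun j => coeffVF (a j)) m W ∧ w = W x} = ⊤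

/-- Membership in `L²_loc(ℝ^{n+1})`. -/
def MemL2loc (g : Spc n → ℂ) : Prop :=
  AEStronglyMeasurable g volume ∧
    ∀ K : Set (Spc n), IsCompact K → IntegrableOn (fun x => ‖g x‖ ^ 2) K volume

/-- Membership in `H^s_loc(ℝ^{n+1})` (`s ≥ 0`), via the Fourier transform. -/
def MemHsLoc (s : ℝ) (g : Spc n → ℂ) : Prop :=
  AEStronglyMeasurable g volume ∧
    ∀ χ : Spc n → ℝ, ContDiff ℝ (⊤ : ℕ∞) χ → HasCompactSupport χ →
      Integrable (fun x => (χ x : ℂ) * g x) volume ∧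
        (∫⁻ ξ : Spc n,
            ENNReal.ofReal ((1 + ‖ξ‖ ^ 2) ^ s) *
              (‖FourierTransform.fourier (fun x => (χ x : ℂ) * g x) ξ‖₊ : ENNReal) ^ 2) < ⊤

/-- `u` solves `P u = g` weakly on the open set `U`, where `Padj` is the formal
adjoint of `P`: for all test functions `φ` compactly supported in `U`,
`(u, Padj φ) = (g, φ)`. -/
def WeakEqOn (Padj : (Spc n → ℂ) → Spc n → ℂ) (u g : Spc n → ℂ) (U : Set (Spc n)) : Prop :=
  ∀ φ : Spc n → ℂ, ContDiff ℝ (⊤ : ℕ∞) φ → HasCompactSupport φ → tsupport φ ⊆ U →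
    ∫ x : Spc n, u x * (starRingEnd ℂ) (Padj φ x) = ∫ x : Spc n, g x * (starRingEnd ℂ) (φ x)

/-- The operator `P` whose formal adjoint is `Padj` is locally solvable at `x₀`, with data in
the class `S` and solutions in the class `T`: there is a compact set `K` containing `x₀` in its
interior such that for every `g ∈ S` there is `u ∈ T` with `P u = g` (weakly) in the interior
of `K`. -/
def LocSolvAt (Padj : (Spc n → ℂ) → Spc n → ℂ) (S T : (Spc n → ℂ) → Prop)
    (x₀ : Spc n) : Prop :=
  ∃ K : Set (Spc n), IsCompact K ∧ x₀ ∈ interior K ∧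
    ∀ g, S g → ∃ u, T u ∧ WeakEqOn Padj u g (interior K)


/-- `c'_j = ∑ₖ ( ∑ₗ c^{lk}_j + (X_k c_j^{k1}) + d_k c_j^{k1} - 2 d_k c_k^{j1} )`,
where `c^{jk}_l` is coded as `c j k l` and `j1` is the index of `X₁`. -/
def cprime {N : ℕ} (a : Fin N → Coeffs n) (c : Fin N → Fin N → Fin N → Spc n → ℂ)
    (j1 j : Fin N) (x : Spc n) : ℂ :=
  ∑ k, ((∑ l, c l k j x) + Xop (a k) (c k j1 j) x + dfun (a k) x * c k j1 j x -
    2 * dfun (a k) x * c j j1 k x)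

/-- `c''_j = ∑ₖ ( (X_k c_k^{j1}) + (X_k^* c_k^{j1}) + (X_k c_j^{k1}) + (X_k^* c_j^{k1}) )`. -/
def cdprime {N : ℕ} (a : Fin N → Coeffs n) (c : Fin N → Fin N → Fin N → Spc n → ℂ)
    (j1 j : Fin N) (x : Spc n) : ℂ :=
  ∑ k, (Xop (a k) (c j j1 k) x + Xstar (a k) (c j j1 k) x +
    Xop (a k) (c k j1 j) x + Xstar (a k) (c k j1 j) x)

/-- The second order operator
`Q_j = (λ(-iX₁f) + i d₁/2) X_j^* X_j + ∑ₖ i c^{j1}_k X_k^* X_j - iλ (X_jX₁f) X_j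
      + (i/2)(c'_j - (X₁d_j) + 2(X_jd₁) + d₁d_j) X_j`. -/
def Qop {N : ℕ} (a : Fin N → Coeffs n) (c : Fin N → Fin N → Fin N → Spc n → ℂ)
    (j1 : Fin N) (f : Spc n → ℝ) (lam : ℝ) (j : Fin N) (v : Spc n → ℂ) (x : Spc n) : ℂ :=
  ((lam : ℂ) * (-Complex.I * Xop (a j1) (fun y => (f y : ℂ)) x) +
        Complex.I * dfun (a j1) x / 2) * Xstar (a j) (Xop (a j) v) x +
    (∑ k, Complex.I * c j j1 k x * Xstar (a k) (Xop (a j) v) x) -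
    Complex.I * (lam : ℂ) * Xop (a j) (Xop (a j1) (fun y => (f y : ℂ))) x * Xop (a j) v x +
    Complex.I / 2 *
      (cprime a c j1 j x - Xop (a j1) (dfun (a j)) x + 2 * Xop (a j) (dfun (a j1)) x +
        dfun (a j1) x * dfun (a j) x) * Xop (a j) v x

/-- The second order operator
`Q'_j = (λ(-iX₁f) + i d₁/2) X_j^* X_j - ∑ₖ i c^{j1}_k X_j^* X_k - iλ (X_jX₁f) X_j
      + (i/2)(c'_j - c''_j - (X₁d_j) + 2(X_jd₁) + d₁d_j) X_j`. -/
def Qop' {N : ℕ} (a : Fin N → Coeffs n) (c : Fin N → Fin N → Fin N → Spc n → ℂ)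
    (j1 : Fin N) (f : Spc n → ℝ) (lam : ℝ) (j : Fin N) (v : Spc n → ℂ) (x : Spc n) : ℂ :=
  ((lam : ℂ) * (-Complex.I * Xop (a j1) (fun y => (f y : ℂ)) x) +
        Complex.I * dfun (a j1) x / 2) * Xstar (a j) (Xop (a j) v) x -
    (∑ k, Complex.I * c j j1 k x * Xstar (a j) (Xop (a k) v) x) -
    Complex.I * (lam : ℂ) * Xop (a j) (Xop (a j1) (fun y => (f y : ℂ))) x * Xop (a j) v x +
    Complex.I / 2 *
      (cprime a c j1 j x - cdprime a c j1 j x - Xop (a j1) (dfun (a j)) x +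
        2 * Xop (a j) (dfun (a j1)) x + dfun (a j1) x * dfun (a j) x) * Xop (a j) v x

/-- The coefficient of the first order operator
`L₁ = ∑ⱼ [ λ dⱼ(Xⱼf) + λ(Xⱼ²f) - λ²(Xⱼf)² ] X₁`. -/
def L1coef {N : ℕ} (a : Fin N → Coeffs n) (f : Spc n → ℝ) (lam : ℝ) (x : Spc n) : ℂ :=
  ∑ j, ((lam : ℂ) * dfun (a j) x * Xop (a j) (fun y => (f y : ℂ)) x +
    (lam : ℂ) * Xop (a j) (Xop (a j) (fun y => (f y : ℂ))) x -
    (lam : ℂ) ^ 2 * Xop (a j) (fun y => (f y : ℂ)) x ^ 2)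

/-- The multiplication operator
`L₀ = ∑ⱼ [ λ(X₁dⱼ)(Xⱼf) + λ dⱼ(X₁Xⱼf) + λ(X₁Xⱼ²f) - 2λ²(Xⱼf)(X₁Xⱼf)
      + (X₁f)(λ² dⱼ(Xⱼf) + λ²(Xⱼ²f) + λ³(iXⱼf)²) ] + λ(X₀f)`. -/
def L0coef {N : ℕ} (a0 : Coeffs n) (a : Fin N → Coeffs n) (j1 : Fin N) (f : Spc n → ℝ)
    (lam : ℝ) (x : Spc n) : ℂ :=
  (∑ j, ((lam : ℂ) * Xop (a j1) (dfun (a j)) x * Xop (a j) (fun y => (f y : ℂ)) x +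
      (lam : ℂ) * dfun (a j) x * Xop (a j1) (Xop (a j) (fun y => (f y : ℂ))) x +
      (lam : ℂ) * Xop (a j1) (Xop (a j) (Xop (a j) (fun y => (f y : ℂ)))) x -
      2 * (lam : ℂ) ^ 2 * Xop (a j) (fun y => (f y : ℂ)) x *
        Xop (a j1) (Xop (a j) (fun y => (f y : ℂ))) x +
      Xop (a j1) (fun y => (f y : ℂ)) x *
        ((lam : ℂ) ^ 2 * dfun (a j) x * Xop (a j) (fun y => (f y : ℂ)) x +
          (lam : ℂ) ^ 2 * Xop (a j) (Xop (a j) (fun y => (f y : ℂ))) x +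
          (lam : ℂ) ^ 3 * (Complex.I * Xop (a j) (fun y => (f y : ℂ)) x) ^ 2))) +
    (lam : ℂ) * Xop a0 (fun y => (f y : ℂ)) x


/-!
Expanding `(P₁v, v)` with the adjoint relation `(Xu, w) = (u, X^*w)` and the commutation
relations `[X_j, X₁] = ∑ₗ c^{j1}_l X_l`, the second order terms of `Im (P₁v, v)` and of
`∑ⱼ Re (G_j v, v)` cancel exactly, and what is left is a sum of terms `Re (g X v, v)`.
For purely imaginary `g` the operator `g X` is skew-adjoint up to the multiplication by
`X g + d g`, so each such term is `O(‖v‖²)` with a constant controlled by `sup_K |X g + d g|`.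
The only multiplier that is not purely imaginary is the coefficient `(i/2) M_j` of `X_j` in `G_j`,
`M_j = c'_j - (X₁d_j) + 2(X_jd₁) + d₁d_j`, because of the part `Γ_j = ∑ₖ ∑ₗ c^{lk}_j` of `c'_j`.
Replacing `M_j` by `M_j - Γ_j`, which is real, does not change the sum over `j`, since
`∑ⱼ Γ_j X_j = ∑ₖ ∑ₗ [X_l, X_k] = 0`.
-/

open Complex ComplexConjugate
open scoped ContDiff

section Calculus

variable {a : Coeffs n} {u w : Spc n → ℂ}

lemma contDiff_pd (k : Fin (n + 1)) (hu : ContDiff ℝ ∞ u) : ContDiff ℝ ∞ (pd k u) :=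
  (ContinuousLinearMap.apply ℝ ℂ _).contDiff.comp (hu.fderiv_right le_rfl)

lemma contDiff_ofReal {b : Spc n → ℝ} (hb : ContDiff ℝ ∞ b) :
    ContDiff ℝ ∞ (fun x => (b x : ℂ)) :=
  ofRealCLM.contDiff.comp hb

lemma contDiff_Xop (ha : SmoothCoeffs a) (hu : ContDiff ℝ ∞ u) : ContDiff ℝ ∞ (Xop a u) :=
  ContDiff.sum fun k _ => (contDiff_ofReal (ha k)).mul (contDiff_const.mul (contDiff_pd k hu))

lemma contDiff_dfun (ha : SmoothCoeffs a) : ContDiff ℝ ∞ (dfun a) :=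
  ContDiff.sum fun k _ => contDiff_const.mul <| contDiff_ofReal <|
    (ContinuousLinearMap.apply ℝ ℝ _).contDiff.comp ((ha k).fderiv_right le_rfl)

lemma contDiff_Xstar (ha : SmoothCoeffs a) (hu : ContDiff ℝ ∞ u) : ContDiff ℝ ∞ (Xstar a u) :=
  (contDiff_Xop ha hu).add ((contDiff_dfun ha).mul hu)

lemma hasCompactSupport_pd (k : Fin (n + 1)) (hu : HasCompactSupport u) :
    HasCompactSupport (pd k u) :=
  hu.fderiv_apply (𝕜 := ℝ) _

lemma hasCompactSupport_Xop (hu : HasCompactSupport u) : HasCompactSupport (Xop a u) :=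
  hu.mono' fun x hx => by_contra fun hxu => hx <| by
    simp [Xop, pd, fderiv_of_notMem_tsupport ℝ hxu]

lemma hasCompactSupport_Xstar (hu : HasCompactSupport u) : HasCompactSupport (Xstar a u) :=
  (hasCompactSupport_Xop hu).add hu.mul_left

lemma pd_mul (k : Fin (n + 1)) {x : Spc n} (hu : DifferentiableAt ℝ u x)
    (hw : DifferentiableAt ℝ w x) :
    pd k (fun y => u y * w y) x = pd k u x * w x + u x * pd k w x := by
  simp only [pd, fderiv_fun_mul hu hw, add_apply, smul_apply, smul_eq_mul]
  ring

lemma pd_conj (k : Fin (n + 1)) (x : Spc n) :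
    pd k (fun y => conj (u y)) x = conj (pd k u x) := by
  simp only [pd]
  rw [show (fun y => conj (u y)) = conjCLE ∘ u from rfl, ContinuousLinearEquiv.comp_fderiv]
  rfl

lemma pd_ofReal (k : Fin (n + 1)) {b : Spc n → ℝ} {x : Spc n} (hb : DifferentiableAt ℝ b x) :
    pd k (fun y => (b y : ℂ)) x = (fderiv ℝ b x (EuclideanSpace.single k 1) : ℂ) := by
  simp only [pd]
  rw [show (fun y => (b y : ℂ)) = ofRealCLM ∘ b from rfl,
    fderiv_comp x ofRealCLM.differentiableAt hb]
  simp

lemma Xop_add {x : Spc n} (hu : DifferentiableAt ℝ u x) (hw : DifferentiableAt ℝ w x) :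
    Xop a (fun y => u y + w y) x = Xop a u x + Xop a w x := by
  simp only [Xop, pd, fderiv_fun_add hu hw, add_apply, ← Finset.sum_add_distrib]
  exact Finset.sum_congr rfl fun k _ => by ring

lemma Xop_neg (x : Spc n) : Xop a (fun y => -u y) x = -Xop a u x := by
  simp only [Xop, pd, fderiv_fun_neg, neg_apply, ← Finset.sum_neg_distrib]
  exact Finset.sum_congr rfl fun k _ => by ring

lemma Xop_mul {x : Spc n} (hu : DifferentiableAt ℝ u x) (hw : DifferentiableAt ℝ w x) :
    Xop a (fun y => u y * w y) x = Xop a u x * w x + u x * Xop a w x := by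
  simp only [Xop, pd_mul _ hu hw, Finset.sum_mul, Finset.mul_sum, ← Finset.sum_add_distrib]
  exact Finset.sum_congr rfl fun k _ => by ring

lemma conj_Xop (x : Spc n) : conj (Xop a u x) = -Xop a (fun y => conj (u y)) x := by
  simp only [Xop, map_sum, map_mul, map_neg, conj_I, conj_ofReal, pd_conj,
    ← Finset.sum_neg_distrib]
  exact Finset.sum_congr rfl fun k _ => by ring

lemma conj_Xop_of_real (hu : ∀ y, conj (u y) = u y) (x : Spc n) :
    conj (Xop a u x) = -Xop a u x := by
  simp only [conj_Xop, hu]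

lemma conj_Xop_of_imag (hu : ∀ y, conj (u y) = -u y) (x : Spc n) :
    conj (Xop a u x) = Xop a u x := by
  simp only [conj_Xop, hu, Xop_neg, neg_neg]

lemma conj_dfun (x : Spc n) : conj (dfun a x) = -dfun a x := by
  simp only [dfun, map_sum, map_mul, map_neg, conj_I, conj_ofReal, ← Finset.sum_neg_distrib]
  exact Finset.sum_congr rfl fun k _ => by ring

lemma conj_eq_neg_of_re_eq_zero {z : ℂ} (h : z.re = 0) : conj z = -z :=
  Complex.ext (by simp [h]) (by simp)

end Calculus

section Pairing

variable {u u' w w' g g' : Spc n → ℂ}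

lemma integrable_mul (hu : Continuous u) (hw : Continuous w)
    (hs : HasCompactSupport u ∨ HasCompactSupport w) : Integrable (fun x => u x * w x) :=
  (hu.mul hw).integrable_of_hasCompactSupport <| hs.elim (·.mul_right) (·.mul_left)

lemma integrable_mul_conj (hu : Continuous u) (hw : Continuous w)
    (hs : HasCompactSupport u ∨ HasCompactSupport w) :
    Integrable (fun x => u x * conj (w x)) :=
  integrable_mul hu (continuous_conj.comp hw) <|
    hs.imp id fun h => h.comp_left (g := conj) (map_zero _)

lemma ip_add_left (hu : Continuous u) (hu' : Continuous u') (hw : Continuous w)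
    (hs : HasCompactSupport w) : ip (fun x => u x + u' x) w = ip u w + ip u' w := by
  simp only [ip, add_mul]
  exact integral_add (integrable_mul_conj hu hw (.inr hs)) (integrable_mul_conj hu' hw (.inr hs))

lemma ip_sum_left {ι : Type*} (s : Finset ι) {u : ι → Spc n → ℂ} (hu : ∀ i, Continuous (u i))
    (hw : Continuous w) (hs : HasCompactSupport w) :
    ip (fun x => ∑ i ∈ s, u i x) w = ∑ i ∈ s, ip (u i) w := by
  simp only [ip, Finset.sum_mul]
  exact integral_finsetSum s fun i _ => integrable_mul_conj (hu i) hw (.inr hs)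

lemma ip_add_right (hu : Continuous u) (hs : HasCompactSupport u) (hw : Continuous w)
    (hw' : Continuous w') : ip u (fun x => w x + w' x) = ip u w + ip u w' := by
  simp only [ip, map_add, mul_add]
  exact integral_add (integrable_mul_conj hu hw (.inl hs)) (integrable_mul_conj hu hw' (.inl hs))

lemma ip_sum_right {ι : Type*} (s : Finset ι) {w : ι → Spc n → ℂ} (hu : Continuous u)
    (hs : HasCompactSupport u) (hw : ∀ i, Continuous (w i)) :
    ip u (fun x => ∑ i ∈ s, w i x) = ∑ i ∈ s, ip u (w i) := by
  simp only [ip, map_sum, Finset.mul_sum]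
  exact integral_finsetSum s fun i _ => integrable_mul_conj hu (hw i) (.inl hs)

lemma ip_const_mul_left (z : ℂ) : ip (fun x => z * u x) w = z * ip u w := by
  simp only [ip, mul_assoc, integral_const_mul]

lemma ip_const_mul_right (z : ℂ) : ip u (fun x => z * w x) = conj z * ip u w := by
  simp only [ip, map_mul, mul_left_comm _ (conj z), integral_const_mul]

lemma ip_neg_left : ip (fun x => -u x) w = -ip u w := by
  simpa using ip_const_mul_left (u := u) (w := w) (-1)

lemma conj_ip : conj (ip u w) = ip w u := by
  simp only [ip, ← integral_conj, map_mul, conj_conj, mul_comm]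

lemma ip_mul_right_of_conj (h : ∀ x, conj (g x) = g' x) :
    ip u (fun x => g x * w x) = ip (fun x => g' x * u x) w := by
  simp only [ip, map_mul, h, mul_assoc, mul_left_comm (u _)]

lemma im_ip_eq_re_ip_I_mul :
    (ip u (fun x => g x * w x)).im = (ip u (fun x => I * g x * w x)).re := by
  simp only [mul_assoc, ip_const_mul_right (u := u) I, conj_I]
  simp

lemma im_ip_mul_right_of_real (hg : ∀ x, conj (g x) = g x) :
    (ip u (fun x => g x * w x)).im = (ip (fun x => -I * g x * u x) w).re := by
  simp only [ip_mul_right_of_conj hg, mul_assoc, ip_const_mul_left]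
  simp

lemma l2sq_nonneg (v : Spc n → ℂ) : 0 ≤ l2sq v :=
  integral_nonneg fun _ => by positivity

end Pairing

section IntegrationByParts

variable {a : Coeffs n} {u v w g : Spc n → ℂ}

lemma integral_mul_pd (k : Fin (n + 1)) (hu : ContDiff ℝ ∞ u) (hw : ContDiff ℝ ∞ w)
    (hs : HasCompactSupport u ∨ HasCompactSupport w) :
    ∫ x, u x * pd k w x = -∫ x, pd k u x * w x :=
  integral_mul_fderiv_eq_neg_fderiv_mul_of_integrable
    (integrable_mul (contDiff_pd k hu).continuous hw.continuous
      (hs.imp (hasCompactSupport_pd k) id))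
    (integrable_mul hu.continuous (contDiff_pd k hw).continuous
      (hs.imp id (hasCompactSupport_pd k)))
    (integrable_mul hu.continuous hw.continuous hs)
    (fun x _ => (hu.differentiable (by simp)) x) (fun x _ => (hw.differentiable (by simp)) x)

lemma conj_Xstar (ha : SmoothCoeffs a) (hw : Differentiable ℝ w) (x : Spc n) :
    conj (Xstar a w x) = ∑ k, I * pd k (fun y => (a k y : ℂ) * conj (w y)) x := by
  have hak : ∀ k, Differentiable ℝ (a k) := fun k => (ha k).differentiable (by simp)
  simp only [Xstar, Xop, dfun, Finset.sum_mul, ← Finset.sum_add_distrib, map_sum]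
  refine Finset.sum_congr rfl fun k _ => ?_
  rw [pd_mul (u := fun y => (a k y : ℂ)) (w := fun y => conj (w y)) k
    (ofRealCLM.differentiableAt.comp x (hak k x)) (conjCLE.differentiableAt.comp x (hw x)),
    pd_ofReal k (hak k x), pd_conj]
  simp only [map_add, map_mul, map_neg, conj_I, conj_ofReal]
  ring

lemma ip_Xop_left (ha : SmoothCoeffs a) (hu : ContDiff ℝ ∞ u) (hw : ContDiff ℝ ∞ w)
    (hs : HasCompactSupport u ∨ HasCompactSupport w) :
    ip (Xop a u) w = ip u (Xstar a w) := by
  set f : Fin (n + 1) → Spc n → ℂ := fun k y => (a k y : ℂ) * conj (w y)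
  have hf : ∀ k, ContDiff ℝ ∞ (f k) := fun k =>
    (contDiff_ofReal (ha k)).mul (conjCLE.contDiff.comp hw)
  have hsf : ∀ k, HasCompactSupport u ∨ HasCompactSupport (f k) := fun k =>
    hs.imp id fun h => (h.comp_left (g := conj) (map_zero _)).mul_left
  have hint : ∀ k, Integrable fun x => pd k u x * f k x := fun k =>
    integrable_mul (contDiff_pd k hu).continuous (hf k).continuous
      ((hsf k).imp (hasCompactSupport_pd k) id)
  have hint' : ∀ k, Integrable fun x => u x * pd k (f k) x := fun k =>
    integrable_mul hu.continuous (contDiff_pd k (hf k)).continuous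
      ((hsf k).imp id (hasCompactSupport_pd k))
  calc ip (Xop a u) w = ∑ k, -I * ∫ x, pd k u x * f k x := by
        simp only [← integral_const_mul, ← integral_finsetSum _ fun k _ => (hint k).const_mul _]
        refine integral_congr_ae (.of_forall fun x => ?_)
        simp only [Xop, f, Finset.sum_mul]
        exact Finset.sum_congr rfl fun k _ => by ring
    _ = ∑ k, I * ∫ x, u x * pd k (f k) x := by
        refine Finset.sum_congr rfl fun k _ => ?_
        rw [integral_mul_pd k hu (hf k) (hsf k)]
        ring
    _ = ip u (Xstar a w) := by
        simp only [← integral_const_mul, ← integral_finsetSum _ fun k _ => (hint' k).const_mul _]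
        refine integral_congr_ae (.of_forall fun x => ?_)
        simp only [conj_Xstar ha (hw.differentiable (by simp)), Finset.mul_sum, f]
        exact Finset.sum_congr rfl fun k _ => by ring

lemma ip_Xstar_left (ha : SmoothCoeffs a) (hu : ContDiff ℝ ∞ u) (hw : ContDiff ℝ ∞ w)
    (hs : HasCompactSupport u ∨ HasCompactSupport w) :
    ip (Xstar a u) w = ip u (Xop a w) := by
  rw [← conj_ip, ← ip_Xop_left ha hw hu hs.symm, conj_ip]

lemma ip_mul_Xstar_left (ha : SmoothCoeffs a) (hg : ContDiff ℝ ∞ g)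
    (hgr : ∀ x, conj (g x) = g x) (hw : ContDiff ℝ ∞ w) (hws : HasCompactSupport w)
    (hv : ContDiff ℝ ∞ v) :
    ip (fun x => g x * Xstar a w x) v =
      ip w (fun x => g x * Xop a v x) + ip w (fun x => Xop a g x * v x) := by
  rw [← ip_mul_right_of_conj hgr, ip_Xstar_left ha hw (hg.mul hv) (.inl hws)]
  rw [show Xop a (fun x => g x * v x) = fun x => g x * Xop a v x + Xop a g x * v x from
    funext fun x => by
      rw [Xop_mul (hg.differentiable (by simp) x) (hv.differentiable (by simp) x)]
      ring]
  exact ip_add_right hw.continuous hws (hg.continuous.mul (contDiff_Xop ha hv).continuous)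
    ((contDiff_Xop ha hg).continuous.mul hv.continuous)

/-- Since `conj (w, X^* w) = (w, X w)`, only the zeroth order part `d` of `X^*` contributes to
the imaginary part. -/
lemma im_ip_Xstar_self (ha : SmoothCoeffs a) (hw : ContDiff ℝ ∞ w) (hs : HasCompactSupport w) :
    (ip w (Xstar a w)).im = (ip w (fun x => I / 2 * dfun a x * w x)).re := by
  set z := ip w (Xstar a w)
  have hz : z = conj z + ip w (fun x => dfun a x * w x) := by
    have hconj : conj z = ip w (Xop a w) := by
      rw [show z = ip (Xop a w) w from (ip_Xop_left ha hw hw (.inl hs)).symm, conj_ip]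
    rw [hconj]
    exact ip_add_right (w' := fun x => dfun a x * w x) hw.continuous hs
      (contDiff_Xop ha hw).continuous ((contDiff_dfun ha).continuous.mul hw.continuous)
  have hd : ip w (fun x => I / 2 * dfun a x * w x) = -(I / 2) * (z - conj z) := by
    simp only [mul_assoc, ip_const_mul_right, map_div₀, conj_I, map_ofNat]
    rw [← eq_sub_iff_add_eq'.mpr hz.symm]
    ring
  rw [hd, sub_conj]
  simp

lemma re_ip_mul_Xop (ha : SmoothCoeffs a) (hg : ContDiff ℝ ∞ g) (hgi : ∀ x, conj (g x) = -g x)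
    (hv : ContDiff ℝ ∞ v) (hs : HasCompactSupport v) :
    2 * (ip (fun x => g x * Xop a v x) v).re =
      -(ip v (fun x => (Xop a g x + dfun a x * g x) * v x)).re := by
  set z := ip (fun x => g x * Xop a v x) v
  have hXstar : ∀ x, Xstar a (fun y => g y * v y) x =
      g x * Xop a v x + (Xop a g x + dfun a x * g x) * v x := fun x => by
    rw [Xstar, Xop_mul (hg.differentiable (by simp) x) (hv.differentiable (by simp) x)]
    ring
  have hz : -z = conj z + ip v (fun x => (Xop a g x + dfun a x * g x) * v x) := by
    calc -z = ip (Xop a v) (fun x => g x * v x) := by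
          rw [ip_mul_right_of_conj hgi, ← ip_neg_left]
          simp only [neg_mul]
      _ = ip v (fun x => g x * Xop a v x + (Xop a g x + dfun a x * g x) * v x) := by
          rw [ip_Xop_left ha hv (hg.mul hv) (.inl hs)]
          exact congrArg (ip v) (funext hXstar)
      _ = _ := by
          rw [conj_ip]
          exact ip_add_right hv.continuous hs (hg.continuous.mul (contDiff_Xop ha hv).continuous)
            (((contDiff_Xop ha hg).add ((contDiff_dfun ha).mul hg)).mul hv).continuous
  have := congrArg re hz
  simp only [neg_re, add_re, conj_re] at this
  linarith

end IntegrationByParts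

section Bounds

def IsL2BoundedOn (K : Set (Spc n)) (F : (Spc n → ℂ) → ℝ) : Prop :=
  ∃ C, ∀ v, TestOn K v → |F v| ≤ C * l2sq v

namespace IsL2BoundedOn

variable {K : Set (Spc n)} {F G : (Spc n → ℂ) → ℝ}

lemma congr (hF : IsL2BoundedOn K F) (h : ∀ v, TestOn K v → F v = G v) :
    IsL2BoundedOn K G := by
  obtain ⟨C, hC⟩ := hF
  exact ⟨C, fun v hv => h v hv ▸ hC v hv⟩

lemma add (hF : IsL2BoundedOn K F) (hG : IsL2BoundedOn K G) :
    IsL2BoundedOn K fun v => F v + G v := by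
  obtain ⟨C, hC⟩ := hF
  obtain ⟨C', hC'⟩ := hG
  exact ⟨C + C', fun v hv => (abs_add_le _ _).trans (by linarith [hC v hv, hC' v hv])⟩

lemma neg (hF : IsL2BoundedOn K F) : IsL2BoundedOn K fun v => -F v := by
  obtain ⟨C, hC⟩ := hF
  exact ⟨C, fun v hv => by simpa only [abs_neg] using hC v hv⟩

lemma sub (hF : IsL2BoundedOn K F) (hG : IsL2BoundedOn K G) :
    IsL2BoundedOn K fun v => F v - G v := by
  simpa only [sub_eq_add_neg] using hF.add hG.neg

lemma sum {ι : Type*} (s : Finset ι) {F : ι → (Spc n → ℂ) → ℝ}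
    (h : ∀ i ∈ s, IsL2BoundedOn K (F i)) : IsL2BoundedOn K fun v => ∑ i ∈ s, F i v := by
  choose! C hC using h
  refine ⟨∑ i ∈ s, C i, fun v hv => ?_⟩
  rw [Finset.sum_mul]
  exact (Finset.abs_sum_le_sum_abs _ _).trans (Finset.sum_le_sum fun i hi => hC i hi v hv)

end IsL2BoundedOn

variable {K : Set (Spc n)}

lemma isL2BoundedOn_re_ip_mul (hK : IsCompact K) {m : Spc n → ℂ} (hm : Continuous m) :
    IsL2BoundedOn K fun v => (ip v (fun x => m x * v x)).re := by
  obtain ⟨C, hC⟩ := hK.exists_bound_of_continuousOn hm.continuousOn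
  refine ⟨max C 0, fun v ⟨hv, hvK⟩ => (abs_re_le_norm _).trans ?_⟩
  have hvs : HasCompactSupport v := hK.of_isClosed_subset (isClosed_tsupport v) hvK
  have hpt : ∀ x, ‖v x * conj (m x * v x)‖ ≤ max C 0 * ‖v x‖ ^ 2 := fun x => by
    by_cases hx : x ∈ tsupport v
    · calc ‖v x * conj (m x * v x)‖ = ‖m x‖ * ‖v x‖ ^ 2 := by
            simp only [norm_mul, RCLike.norm_conj]
            ring
        _ ≤ max C 0 * ‖v x‖ ^ 2 := by gcongr; exact (hC x (hvK hx)).trans (le_max_left _ _)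
    · simp [image_eq_zero_of_notMem_tsupport hx]
  have hs2 : HasCompactSupport fun x => max C 0 * ‖v x‖ ^ 2 :=
    (hvs.norm.comp_left (g := fun t : ℝ => t ^ 2) (by norm_num)).mul_left
  have hint : Integrable fun x => max C 0 * ‖v x‖ ^ 2 :=
    (continuous_const.mul (hv.continuous.norm.pow 2)).integrable_of_hasCompactSupport hs2
  calc ‖ip v (fun x => m x * v x)‖ ≤ ∫ x, max C 0 * ‖v x‖ ^ 2 :=
        norm_integral_le_of_norm_le hint (.of_forall hpt)
    _ = max C 0 * l2sq v := integral_const_mul _ _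

lemma isL2BoundedOn_re_ip_mul_Xop (hK : IsCompact K) {a : Coeffs n} (ha : SmoothCoeffs a)
    {g : Spc n → ℂ} (hg : ContDiff ℝ ∞ g) (hgi : ∀ x, conj (g x) = -g x) :
    IsL2BoundedOn K fun v => (ip (fun x => g x * Xop a v x) v).re := by
  obtain ⟨C, hC⟩ := isL2BoundedOn_re_ip_mul hK
    ((contDiff_Xop ha hg).add ((contDiff_dfun ha).mul hg)).continuous
  refine ⟨C / 2, fun v hv => ?_⟩
  have h := re_ip_mul_Xop ha hg hgi hv.1 (hK.of_isClosed_subset (isClosed_tsupport v) hv.2)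
  have hb := hC v hv
  rw [← abs_neg, ← h, abs_mul] at hb
  norm_num at hb
  linarith

end Bounds

section Estimate

variable {N : ℕ} {a0 : Coeffs n} {a : Fin N → Coeffs n} {c : Fin N → Fin N → Fin N → Spc n → ℂ}
  {v : Spc n → ℂ}

lemma Xop_Xstar_apply (ha : ∀ j, SmoothCoeffs (a j)) (hc : IsInvolutiveWith a c)
    (hv : ContDiff ℝ ∞ v) (j j1 : Fin N) (x : Spc n) :
    Xop (a j) (Xstar (a j1) v) x = Xstar (a j1) (Xop (a j) v) x +
      ∑ l, c j j1 l x * Xop (a l) v x + Xop (a j) (dfun (a j1)) x * v x := by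
  have hd := (contDiff_dfun (ha j1)).differentiable (by simp)
  have hv' := hv.differentiable (by simp)
  change Xop (a j) (fun y => Xop (a j1) v y + dfun (a j1) y * v y) x = _
  rw [Xop_add (w := fun y => dfun (a j1) y * v y)
    ((contDiff_Xop (ha j1) hv).differentiable (by simp) x) ((hd x).mul (hv' x)),
    Xop_mul (hd x) (hv' x), Xstar]
  linear_combination hc.2 j j1 v hv x

lemma ip_P1 (ha0 : SmoothCoeffs a0) (ha : ∀ j, SmoothCoeffs (a j)) (hc : IsInvolutiveWith a c)
    (hv : ContDiff ℝ ∞ v) (hs : HasCompactSupport v) (j1 : Fin N) :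
    ip (P1 a0 a j1 v) v = ∑ j, (ip (Xop (a j) v) (Xstar (a j1) (Xop (a j) v)) +
      ∑ l, ip (Xop (a j) v) (fun x => c j j1 l x * Xop (a l) v x) +
      ip (Xop (a j) v) (fun x => Xop (a j) (dfun (a j1)) x * v x)) + ip (Xop a0 v) v := by
  have hw : ∀ j, ContDiff ℝ ∞ (Xop (a j) v) := fun j => contDiff_Xop (ha j) hv
  have hws : ∀ j, HasCompactSupport (Xop (a j) v) := fun j => hasCompactSupport_Xop hs
  have hS : ContDiff ℝ ∞ (sumXsX a v) := ContDiff.sum fun j _ => contDiff_Xstar (ha j) (hw j)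
  have hc' : ∀ j k l, Continuous (c j k l) := fun j k l => (hc.1 j k l).1.continuous
  have hw' : ∀ j, Continuous (Xop (a j) v) := fun j => (hw j).continuous
  have hXw : ∀ j, Continuous (Xstar (a j1) (Xop (a j) v)) := fun j =>
    (contDiff_Xstar (ha j1) (hw j)).continuous
  have hXd : ∀ j, Continuous (Xop (a j) (dfun (a j1))) := fun j =>
    (contDiff_Xop (ha j) (contDiff_dfun (ha j1))).continuous
  calc ip (P1 a0 a j1 v) v = ip (Xop (a j1) (sumXsX a v)) v + ip (Xop a0 v) v :=
        ip_add_left (contDiff_Xop (ha j1) hS).continuous (contDiff_Xop ha0 hv).continuous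
          hv.continuous hs
    _ = ∑ j, ip (Xstar (a j) (Xop (a j) v)) (Xstar (a j1) v) + ip (Xop a0 v) v := by
        rw [ip_Xop_left (ha j1) hS hv (.inr hs)]
        unfold sumXsX
        rw [ip_sum_left _ (fun j => (contDiff_Xstar (ha j) (hw j)).continuous)
            (contDiff_Xstar (ha j1) hv).continuous (hasCompactSupport_Xstar hs)]
    _ = ∑ j, ip (Xop (a j) v) (Xop (a j) (Xstar (a j1) v)) + ip (Xop a0 v) v := by
        congr 1
        exact Finset.sum_congr rfl fun j _ =>
          ip_Xstar_left (ha j) (hw j) (contDiff_Xstar (ha j1) hv) (.inl (hws j))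
    _ = _ := by
        congr 1
        refine Finset.sum_congr rfl fun j _ => ?_
        rw [show Xop (a j) (Xstar (a j1) v) = _ from funext (Xop_Xstar_apply ha hc hv j j1),
          ip_add_right (hw' j) (hws j) (by fun_prop) (by fun_prop),
          ip_add_right (hw' j) (hws j) (by fun_prop) (by fun_prop),
          ip_sum_right _ (hw' j) (hws j) (by fun_prop)]

def mcoef (a : Fin N → Coeffs n) (c : Fin N → Fin N → Fin N → Spc n → ℂ) (j1 j : Fin N)
    (x : Spc n) : ℂ :=
  cprime a c j1 j x - Xop (a j1) (dfun (a j)) x + 2 * Xop (a j) (dfun (a j1)) x +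
    dfun (a j1) x * dfun (a j) x

/-- The operator `G_j` whose real part bounds `Im (P₁v, v)` from below in the theorem. -/
def Gop (a : Fin N → Coeffs n) (c : Fin N → Fin N → Fin N → Spc n → ℂ) (j1 j : Fin N)
    (v : Spc n → ℂ) (x : Spc n) : ℂ :=
  (∑ k, I * c j j1 k x * Xstar (a k) (Xop (a j) v) x) +
    I / 2 * dfun (a j1) x * Xstar (a j) (Xop (a j) v) x + I / 2 * mcoef a c j1 j x * Xop (a j) v x

def structSum (c : Fin N → Fin N → Fin N → Spc n → ℂ) (j : Fin N) (x : Spc n) : ℂ :=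
  ∑ k, ∑ l, c l k j x

lemma contDiff_cprime (ha : ∀ j, SmoothCoeffs (a j)) (hc : IsInvolutiveWith a c)
    (j1 j : Fin N) : ContDiff ℝ ∞ (cprime a c j1 j) := by
  have hc' : ∀ j k l, ContDiff ℝ ∞ (c j k l) := fun j k l => (hc.1 j k l).1
  exact ContDiff.sum fun k _ => (((ContDiff.sum fun l _ => hc' l k j).add
    (contDiff_Xop (ha k) (hc' k j1 j))).add ((contDiff_dfun (ha k)).mul (hc' k j1 j))).sub
    ((contDiff_const.mul (contDiff_dfun (ha k))).mul (hc' j j1 k))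

lemma contDiff_mcoef (ha : ∀ j, SmoothCoeffs (a j)) (hc : IsInvolutiveWith a c)
    (j1 j : Fin N) : ContDiff ℝ ∞ (mcoef a c j1 j) :=
  (((contDiff_cprime ha hc j1 j).sub (contDiff_Xop (ha j1) (contDiff_dfun (ha j)))).add
    (contDiff_const.mul (contDiff_Xop (ha j) (contDiff_dfun (ha j1))))).add
    ((contDiff_dfun (ha j1)).mul (contDiff_dfun (ha j)))

lemma contDiff_structSum (hc : IsInvolutiveWith a c) (j : Fin N) :
    ContDiff ℝ ∞ (structSum c j) :=
  ContDiff.sum fun k _ => ContDiff.sum fun l _ => (hc.1 l k j).1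

lemma ip_Gop (ha : ∀ j, SmoothCoeffs (a j)) (hc : IsInvolutiveWith a c)
    (hv : ContDiff ℝ ∞ v) (hs : HasCompactSupport v) (j1 j : Fin N) :
    ip (Gop a c j1 j v) v =
      ∑ k, (ip (Xop (a j) v) (fun x => I * c j j1 k x * Xop (a k) v x) +
        ip (Xop (a j) v) (fun x => Xop (a k) (fun y => I * c j j1 k y) x * v x)) +
      (ip (Xop (a j) v) (fun x => I / 2 * dfun (a j1) x * Xop (a j) v x) +
        ip (Xop (a j) v) (fun x => Xop (a j) (fun y => I / 2 * dfun (a j1) y) x * v x)) +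
      ip (fun x => I / 2 * mcoef a c j1 j x * Xop (a j) v x) v := by
  have hw : ContDiff ℝ ∞ (Xop (a j) v) := contDiff_Xop (ha j) hv
  have hws : HasCompactSupport (Xop (a j) v) := hasCompactSupport_Xop hs
  have hIc : ∀ k, ContDiff ℝ ∞ fun x => I * c j j1 k x := fun k =>
    contDiff_const.mul (hc.1 j j1 k).1
  have hId : ContDiff ℝ ∞ fun x => I / 2 * dfun (a j1) x :=
    contDiff_const.mul (contDiff_dfun (ha j1))
  have hc' : ∀ k l m, Continuous (c k l m) := fun k l m => (hc.1 k l m).1.continuous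
  have hX : ∀ k, Continuous (Xstar (a k) (Xop (a j) v)) := fun k =>
    (contDiff_Xstar (ha k) hw).continuous
  have hd : Continuous (dfun (a j1)) := (contDiff_dfun (ha j1)).continuous
  have hm : Continuous (mcoef a c j1 j) := (contDiff_mcoef ha hc j1 j).continuous
  have hw' : Continuous (Xop (a j) v) := hw.continuous
  unfold Gop
  rw [ip_add_left (by fun_prop) (by fun_prop) hv.continuous hs,
    ip_add_left (by fun_prop) (by fun_prop) hv.continuous hs,
    ip_sum_left _ (by fun_prop) hv.continuous hs]
  congr 2
  · refine Finset.sum_congr rfl fun k _ => ip_mul_Xstar_left (ha k) (hIc k) (fun x => ?_)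
      hw hws hv
    simp [conj_eq_neg_of_re_eq_zero ((hc.1 j j1 k).2 x)]
  · exact ip_mul_Xstar_left (ha j) hId (fun x => by simp [conj_dfun, map_ofNat]; ring) hw hws hv

lemma im_sub_re_ip_Gop (ha : ∀ j, SmoothCoeffs (a j)) (hc : IsInvolutiveWith a c)
    (hv : ContDiff ℝ ∞ v) (hs : HasCompactSupport v) (j1 j : Fin N) :
    (ip (Xop (a j) v) (Xstar (a j1) (Xop (a j) v)) +
        ∑ l, ip (Xop (a j) v) (fun x => c j j1 l x * Xop (a l) v x) +
        ip (Xop (a j) v) (fun x => Xop (a j) (dfun (a j1)) x * v x)).im -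
      (ip (Gop a c j1 j v) v).re =
    (ip (fun x => -I * Xop (a j) (dfun (a j1)) x * Xop (a j) v x) v).re -
      ∑ k, (ip (fun x => -Xop (a k) (fun y => I * c j j1 k y) x * Xop (a j) v x) v).re -
      (ip (fun x => -Xop (a j) (fun y => I / 2 * dfun (a j1) y) x * Xop (a j) v x) v).re -
      (ip (fun x => I / 2 * mcoef a c j1 j x * Xop (a j) v x) v).re := by
  have hIc : ∀ k y, conj (I * c j j1 k y) = I * c j j1 k y := fun k y => by
    simp [conj_eq_neg_of_re_eq_zero ((hc.1 j j1 k).2 y)]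
  have hId : ∀ y, conj (I / 2 * dfun (a j1) y) = I / 2 * dfun (a j1) y := fun y => by
    simp [conj_dfun, map_ofNat]
    ring
  rw [ip_Gop ha hc hv hs]
  simp only [add_im, add_re, im_sum, re_sum]
  rw [im_ip_Xstar_self (ha j1) (contDiff_Xop (ha j) hv) (hasCompactSupport_Xop hs),
    im_ip_mul_right_of_real (conj_Xop_of_imag conj_dfun),
    ip_mul_right_of_conj (conj_Xop_of_real hId)]
  simp only [ip_mul_right_of_conj (conj_Xop_of_real (hIc _)), im_ip_eq_re_ip_I_mul,
    Finset.sum_add_distrib]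
  ring

lemma sum_structSum_mul_Xop (hc : IsInvolutiveWith a c) (hv : ContDiff ℝ ∞ v) (x : Spc n) :
    ∑ j, structSum c j x * Xop (a j) v x = 0 := by
  calc ∑ j, structSum c j x * Xop (a j) v x = ∑ k, ∑ l, ∑ j, c l k j x * Xop (a j) v x := by
        simp only [structSum, Finset.sum_mul]
        rw [Finset.sum_comm]
        exact Finset.sum_congr rfl fun k _ => Finset.sum_comm
    _ = ∑ k, ∑ l, (Xop (a l) (Xop (a k) v) x - Xop (a k) (Xop (a l) v) x) := by
        simp only [hc.2 _ _ v hv x]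
    _ = 0 := by
        simp only [Finset.sum_sub_distrib]
        rw [Finset.sum_comm, sub_self]

lemma sum_ip_mcoef_mul_Xop (ha : ∀ j, SmoothCoeffs (a j)) (hc : IsInvolutiveWith a c)
    (hv : ContDiff ℝ ∞ v) (hs : HasCompactSupport v) (j1 : Fin N) :
    ∑ j, ip (fun x => I / 2 * mcoef a c j1 j x * Xop (a j) v x) v =
      ∑ j, ip (fun x => I / 2 * (mcoef a c j1 j x - structSum c j x) * Xop (a j) v x) v := by
  have hw : ∀ j, Continuous (Xop (a j) v) := fun j => (contDiff_Xop (ha j) hv).continuous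
  have hm : ∀ j, Continuous (mcoef a c j1 j) := fun j => (contDiff_mcoef ha hc j1 j).continuous
  have hΓ : ∀ j, Continuous (structSum c j) := fun j => (contDiff_structSum hc j).continuous
  rw [← ip_sum_left _ (by fun_prop) hv.continuous hs,
    ← ip_sum_left _ (by fun_prop) hv.continuous hs]
  congr 1
  funext x
  simp only [mul_sub, sub_mul, Finset.sum_sub_distrib]
  rw [show ∑ j, I / 2 * structSum c j x * Xop (a j) v x =
      I / 2 * ∑ j, structSum c j x * Xop (a j) v x by simp only [Finset.mul_sum, mul_assoc],
    sum_structSum_mul_Xop hc hv x]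
  ring

lemma conj_cprime (hc : IsInvolutiveWith a c) (j1 j : Fin N) (x : Spc n) :
    conj (cprime a c j1 j x) = cprime a c j1 j x - 2 * structSum c j x := by
  have hci : ∀ j k l y, conj (c j k l y) = -c j k l y := fun j k l y =>
    conj_eq_neg_of_re_eq_zero ((hc.1 j k l).2 y)
  simp only [cprime, structSum, map_sum, Finset.mul_sum, ← Finset.sum_sub_distrib]
  refine Finset.sum_congr rfl fun k _ => ?_
  simp only [map_add, map_sub, map_mul, map_sum, map_ofNat, conj_dfun, hci,
    conj_Xop_of_imag (hci _ _ _), Finset.sum_neg_distrib, ← Finset.mul_sum]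
  ring

lemma conj_mcoef (hc : IsInvolutiveWith a c) (j1 j : Fin N) (x : Spc n) :
    conj (mcoef a c j1 j x) = mcoef a c j1 j x - 2 * structSum c j x := by
  simp only [mcoef, map_add, map_sub, map_mul, map_ofNat, conj_cprime hc, conj_dfun,
    conj_Xop_of_imag conj_dfun]
  ring

/-- Every multiplier `g` in a term `Re (g X v, v)` here is purely imaginary. -/
def remainder (a0 : Coeffs n) (a : Fin N → Coeffs n) (c : Fin N → Fin N → Fin N → Spc n → ℂ)
    (j1 : Fin N) (v : Spc n → ℂ) : ℝ :=
  ∑ j, ((ip (fun x => -I * Xop (a j) (dfun (a j1)) x * Xop (a j) v x) v).re -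
      ∑ k, (ip (fun x => -Xop (a k) (fun y => I * c j j1 k y) x * Xop (a j) v x) v).re -
      (ip (fun x => -Xop (a j) (fun y => I / 2 * dfun (a j1) y) x * Xop (a j) v x) v).re -
      (ip (fun x => I / 2 * (mcoef a c j1 j x - structSum c j x) * Xop (a j) v x) v).re) +
    (ip (fun x => -I * Xop a0 v x) v).re

lemma im_ip_P1_sub_sum_re_ip_Gop (ha0 : SmoothCoeffs a0) (ha : ∀ j, SmoothCoeffs (a j))
    (hc : IsInvolutiveWith a c) (hv : ContDiff ℝ ∞ v) (hs : HasCompactSupport v) (j1 : Fin N) :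
    (ip (P1 a0 a j1 v) v).im - ∑ j, (ip (Gop a c j1 j v) v).re = remainder a0 a c j1 v := by
  have hX0 : (ip (Xop a0 v) v).im = (ip (fun x => -I * Xop a0 v x) v).re := by
    rw [ip_const_mul_left]
    simp
  have hΓ := congrArg re (sum_ip_mcoef_mul_Xop ha hc hv hs j1)
  rw [ip_P1 ha0 ha hc hv hs, add_im, im_sum, hX0, add_sub_right_comm, ← Finset.sum_sub_distrib,
    Finset.sum_congr rfl fun j _ => im_sub_re_ip_Gop ha hc hv hs j1 j, remainder]
  simp only [re_sum, Finset.sum_sub_distrib] at hΓ ⊢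
  linarith

lemma isL2BoundedOn_remainder {K : Set (Spc n)} (hK : IsCompact K) (ha0 : SmoothCoeffs a0)
    (ha : ∀ j, SmoothCoeffs (a j)) (hc : IsInvolutiveWith a c) (j1 : Fin N) :
    IsL2BoundedOn K (remainder a0 a c j1) := by
  have hc' : ∀ j k l, ContDiff ℝ ∞ (c j k l) := fun j k l => (hc.1 j k l).1
  have hci : ∀ j k l y, conj (c j k l y) = -c j k l y := fun j k l y =>
    conj_eq_neg_of_re_eq_zero ((hc.1 j k l).2 y)
  have h1 : ∀ j, IsL2BoundedOn K fun v =>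
      (ip (fun x => -I * Xop (a j) (dfun (a j1)) x * Xop (a j) v x) v).re := fun j =>
    isL2BoundedOn_re_ip_mul_Xop hK (ha j)
      (contDiff_const.mul (contDiff_Xop (ha j) (contDiff_dfun (ha j1))))
      fun x => by simp [conj_Xop_of_imag conj_dfun]
  have h2 : ∀ j k, IsL2BoundedOn K fun v =>
      (ip (fun x => -Xop (a k) (fun y => I * c j j1 k y) x * Xop (a j) v x) v).re := fun j k =>
    isL2BoundedOn_re_ip_mul_Xop hK (ha j)
      (contDiff_Xop (ha k) (contDiff_const.mul (hc' j j1 k))).neg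
      fun x => by rw [map_neg, conj_Xop_of_real fun y => by simp [hci]]
  have h3 : ∀ j, IsL2BoundedOn K fun v =>
      (ip (fun x => -Xop (a j) (fun y => I / 2 * dfun (a j1) y) x * Xop (a j) v x) v).re :=
    fun j => isL2BoundedOn_re_ip_mul_Xop hK (ha j)
      (contDiff_Xop (ha j) (contDiff_const.mul (contDiff_dfun (ha j1)))).neg
      fun x => by rw [map_neg, conj_Xop_of_real fun y => by simp [conj_dfun, map_ofNat]; ring]
  have h4 : ∀ j, IsL2BoundedOn K fun v =>
      (ip (fun x => I / 2 * (mcoef a c j1 j x - structSum c j x) * Xop (a j) v x) v).re :=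
    fun j => isL2BoundedOn_re_ip_mul_Xop hK (ha j)
      (contDiff_const.mul ((contDiff_mcoef ha hc j1 j).sub (contDiff_structSum hc j)))
      fun x => by
        simp only [map_mul, map_sub, map_div₀, conj_I, map_ofNat, conj_mcoef hc, structSum,
          map_sum, hci, Finset.sum_neg_distrib]
        ring
  have h5 : IsL2BoundedOn K fun v => (ip (fun x => -I * Xop a0 v x) v).re :=
    isL2BoundedOn_re_ip_mul_Xop hK ha0 contDiff_const fun x => by simp
  exact (IsL2BoundedOn.sum _ fun j _ => (((h1 j).sub (.sum _ fun k _ => h2 j k)).sub (h3 j)).sub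
    (h4 j)).add h5

end Estimate

/-- under (H1), for every compact `K` there is `C_K > 0` such that
`Im(P₁v, v) ≥ ∑ⱼ Re((∑ₖ i c^{j1}_k X_k^*X_j + (i/2)d₁X_j^*X_j
  + (i/2)(c'_j - (X₁d_j) + 2(X_jd₁) + d₁d_j)X_j) v, v) - C_K‖v‖²` for `v ∈ C₀^∞(K)`. -/
theorem stmt9 (n N : ℕ) (hN : 0 < N)
    (a0 : Coeffs n) (a : Fin N → Coeffs n)
    (c : Fin N → Fin N → Fin N → Spc n → ℂ)
    (ha0 : SmoothCoeffs a0) (ha : ∀ j, SmoothCoeffs (a j))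
    (hc : IsInvolutiveWith a c)
    (K : Set (Spc n)) (hK : IsCompact K) :
    ∃ CK : ℝ, 0 < CK ∧ ∀ v : Spc n → ℂ, TestOn K v →
      (∑ j, (ip (fun x =>
          (∑ k, Complex.I * c j ⟨0, hN⟩ k x * Xstar (a k) (Xop (a j) v) x) +
            Complex.I / 2 * dfun (a ⟨0, hN⟩) x * Xstar (a j) (Xop (a j) v) x +
            Complex.I / 2 *
              (cprime a c ⟨0, hN⟩ j x - Xop (a ⟨0, hN⟩) (dfun (a j)) x +
                2 * Xop (a j) (dfun (a ⟨0, hN⟩)) x +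
                dfun (a ⟨0, hN⟩) x * dfun (a j) x) * Xop (a j) v x) v).re) -
          CK * l2sq v ≤
        (ip (P1 a0 a ⟨0, hN⟩ v) v).im := by
  obtain ⟨C, hC⟩ := (isL2BoundedOn_remainder hK ha0 ha hc ⟨0, hN⟩).congr fun v hv =>
    (im_ip_P1_sub_sum_re_ip_Gop ha0 ha hc hv.1
      (hK.of_isClosed_subset (isClosed_tsupport v) hv.2) ⟨0, hN⟩).symm
  refine ⟨|C| + 1, by positivity, fun v hv => ?_⟩
  have hCv := neg_le_of_abs_le (hC v hv)
  have hle : C * l2sq v ≤ (|C| + 1) * l2sq v :=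
    mul_le_mul_of_nonneg_right (by linarith [le_abs_self C]) (l2sq_nonneg v)
  change ∑ j, (ip (Gop a c ⟨0, hN⟩ j v) v).re - _ ≤ _
  linarith

end Carleman
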